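/- arXiv:1411.4700 — 3 statements merged into one kernel-verified Lean document; each statement's English description precedes it below -/
import Mathlib

section
/- Let α > 0, let x : ℝ → ℝ be bounded and continuous, and for each integer j ≥ 1 define r_j(t) := ∫_{−∞}^t x(s) F_j(t−s) ds. Then each r_j is well-defined (the integrand is integrable on (−∞, t] for every t), and for every integer j ≥ 2 the function r_j is differentiable with r_j'(t) = α(r_{j−1}(t) − r_j(t)) for every t ∈ ℝ. -/
open MeasureTheory

/-- The Gamma kernel `F_k(t) = α^k t^(k-1) e^(-α t) / (k-1)!`. -/
noncomputable def gammaKernel (α : ℝ) (k : ℕ) (t : ℝ) : ℝ :=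
  α ^ k * t ^ (k - 1) * Real.exp (-α * t) / (Nat.factorial (k - 1) : ℝ)

/-!
Pulling `e^{-ατ}` out of the kernel gives `r_{n+1}(τ) = α^{n+1}/n! · e^{-ατ} H_n(τ)` with
`H_n(τ) = ∫_{-∞}^τ x(s) e^{αs} (τ - s)^n ds`. Expanding `(τ - s)^n` binomially makes `H_n` a
polynomial in `τ` whose coefficients are the moments `∫_{-∞}^τ x(s) e^{αs} s^k ds`, each
differentiable by the fundamental theorem of calculus. In the derivative of `H_{n+1}` the
terms coming from the moments recombine into `x(τ) e^{ατ} (τ - τ)^{n+1} = 0`, so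
`H_{n+1}' = (n+1) H_n`, and the product rule turns this into
`r_{n+2}' = α (r_{n+1} - r_{n+2})`. All integrals converge because `x` is bounded and
`e^{αs} |s|^k = O(e^{αs/2})` as `s → -∞`.
-/

open Set Filter Asymptotics

theorem integrableOn_Iic_exp_mul_mul_abs_pow {α : ℝ} (hα : 0 < α) (m : ℕ) (t : ℝ) :
    IntegrableOn (fun s => Real.exp (α * s) * |s| ^ m) (Iic t) := by
  have hpow : (fun s : ℝ => |s| ^ m) =o[atBot] fun s => Real.exp (-(α / 2) * s) := by
    have := (isLittleO_pow_exp_pos_mul_atTop m (half_pos hα)).comp_tendsto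
      tendsto_neg_atBot_atTop
    simpa [Function.comp_def, abs_pow] using this.norm_left
  have ho : (fun s => Real.exp (α * s) * |s| ^ m) =O[atBot] fun s => Real.exp (α / 2 * s) := by
    refine ((isBigO_refl (fun s => Real.exp (α * s)) atBot).mul hpow.isBigO).congr_right fun s => ?_
    rw [← Real.exp_add]; ring_nf
  have hcont : Continuous fun s => Real.exp (α * s) * |s| ^ m := by fun_prop
  exact (hcont.locallyIntegrable.locallyIntegrableOn _).integrableOn_of_isBigO_atBot ho
    ⟨Iic 0, Iic_mem_atBot 0, integrableOn_exp_mul_Iic (half_pos hα) 0⟩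

theorem mul_sub_pow_eq_sum (g : ℝ → ℝ) (n : ℕ) (τ s : ℝ) :
    g s * (τ - s) ^ n =
      ∑ k ∈ Finset.range (n + 1), n.choose k * τ ^ k * (g s * (-s) ^ (n - k)) := by
  rw [sub_eq_add_neg, add_pow, Finset.mul_sum]
  exact Finset.sum_congr rfl fun k _ => by ring

section MomentsIic

variable {g : ℝ → ℝ}

theorem hasDerivAt_integral_Iic (hg : Continuous g) (hint : ∀ τ, IntegrableOn g (Iic τ))
    (t : ℝ) : HasDerivAt (fun τ => ∫ s in Iic τ, g s) (g t) t := by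
  have hsplit : (fun τ => ∫ s in Iic τ, g s) =
      fun τ => (∫ s in Iic t, g s) + ∫ s in t..τ, g s := by
    funext τ
    rw [← intervalIntegral.integral_Iic_sub_Iic (hint t) (hint τ), add_sub_cancel]
  rw [hsplit]
  exact (intervalIntegral.integral_hasDerivAt_right (hg.intervalIntegrable t t)
    (hg.stronglyMeasurableAtFilter _ _) hg.continuousAt).const_add _

variable (hmom : ∀ (m : ℕ) (t : ℝ), IntegrableOn (fun s => g s * s ^ m) (Iic t))
include hmom

theorem integrableOn_Iic_mul_neg_pow (m : ℕ) (t : ℝ) :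
    IntegrableOn (fun s => g s * (-s) ^ m) (Iic t) :=
  IntegrableOn.congr_fun ((hmom m t).const_mul ((-1) ^ m))
    (fun s _ => by rw [neg_pow]; ring) measurableSet_Iic

theorem integrableOn_Iic_mul_sub_pow (n : ℕ) (τ t : ℝ) :
    IntegrableOn (fun s => g s * (τ - s) ^ n) (Iic t) := by
  simp_rw [mul_sub_pow_eq_sum g n τ]
  exact integrable_finsetSum _ fun k _ => (integrableOn_Iic_mul_neg_pow hmom _ t).const_mul _

theorem integral_Iic_mul_sub_pow (n : ℕ) (τ σ : ℝ) :
    ∫ s in Iic σ, g s * (τ - s) ^ n =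
      ∑ k ∈ Finset.range (n + 1), n.choose k * τ ^ k * ∫ s in Iic σ, g s * (-s) ^ (n - k) := by
  simp_rw [mul_sub_pow_eq_sum g n τ]
  rw [integral_finsetSum _ fun k _ => (integrableOn_Iic_mul_neg_pow hmom _ σ).const_mul _]
  simp_rw [integral_const_mul]

theorem hasDerivAt_integral_Iic_mul_sub_pow_succ (hg : Continuous g) (n : ℕ) (t : ℝ) :
    HasDerivAt (fun τ => ∫ s in Iic τ, g s * (τ - s) ^ (n + 1))
      ((n + 1) * ∫ s in Iic t, g s * (t - s) ^ n) t := by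
  set moment : ℕ → ℝ → ℝ := fun m σ => ∫ s in Iic σ, g s * (-s) ^ m
  have hmoment : ∀ m, HasDerivAt (moment m) (g t * (-t) ^ m) t := fun m =>
    hasDerivAt_integral_Iic (by fun_prop) (integrableOn_Iic_mul_neg_pow hmom m) t
  have hsum := HasDerivAt.fun_sum fun k (_ : k ∈ Finset.range (n + 2)) =>
    ((hasDerivAt_pow k t).const_mul ((n + 1).choose k : ℝ)).mul (hmoment (n + 1 - k))
  simp_rw [funext fun τ => integral_Iic_mul_sub_pow hmom (n + 1) τ τ]
  refine hsum.congr_deriv ?_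
  have hboundary : ∑ k ∈ Finset.range (n + 2),
      (n + 1).choose k * t ^ k * (g t * (-t) ^ (n + 1 - k)) = 0 := by
    rw [← mul_sub_pow_eq_sum, sub_self, zero_pow n.succ_ne_zero, mul_zero]
  rw [Finset.sum_add_distrib, hboundary, add_zero, integral_Iic_mul_sub_pow hmom n t t,
    Finset.sum_range_succ', Finset.mul_sum]
  simp only [CharP.cast_eq_zero, zero_mul, mul_zero, add_zero]
  refine Finset.sum_congr rfl fun k _ => ?_
  have hchoose : ((n + 1).choose (k + 1) : ℝ) * (k + 1) = (n + 1) * n.choose k := by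
    exact_mod_cast (Nat.add_one_mul_choose_eq n k).symm
  rw [Nat.add_sub_cancel, Nat.add_sub_add_right]
  push_cast
  linear_combination (t ^ k * moment (n - k) t) * hchoose

end MomentsIic

theorem mul_gammaKernel_sub (α : ℝ) (x : ℝ → ℝ) (j : ℕ) (t s : ℝ) :
    x s * gammaKernel α j (t - s) = α ^ j / (j - 1).factorial * Real.exp (-(α * t)) *
      (x s * Real.exp (α * s) * (t - s) ^ (j - 1)) := by
  rw [gammaKernel, show -α * (t - s) = -(α * t) + α * s by ring, Real.exp_add]
  ring

theorem integral_Iic_mul_gammaKernel (α : ℝ) (x : ℝ → ℝ) (j : ℕ) (τ : ℝ) :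
    ∫ s in Iic τ, x s * gammaKernel α j (τ - s) = α ^ j / (j - 1).factorial *
      Real.exp (-(α * τ)) * ∫ s in Iic τ, x s * Real.exp (α * s) * (τ - s) ^ (j - 1) := by
  simp_rw [mul_gammaKernel_sub]
  exact integral_const_mul _ _

section GammaKernel

variable {α : ℝ} {x : ℝ → ℝ}

theorem integrableOn_Iic_mul_exp_mul_pow (hα : 0 < α) (hx : AEStronglyMeasurable x)
    {M : ℝ} (hM : ∀ s, |x s| ≤ M) (m : ℕ) (t : ℝ) :
    IntegrableOn (fun s => x s * Real.exp (α * s) * s ^ m) (Iic t) := by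
  refine ((integrableOn_Iic_exp_mul_mul_abs_pow hα m t).const_mul M).mono' ?_ ?_
  · have hcont : Continuous fun s => Real.exp (α * s) * s ^ m := by fun_prop
    exact (hx.mul hcont.aestronglyMeasurable
      |>.congr (.of_forall fun s => (mul_assoc _ _ _).symm)).restrict
  · filter_upwards with s
    rw [Real.norm_eq_abs, abs_mul, abs_mul, abs_pow, Real.abs_exp, mul_assoc]
    exact mul_le_mul_of_nonneg_right (hM s) (by positivity)

theorem integrableOn_Iic_mul_gammaKernel (hα : 0 < α) (hx : AEStronglyMeasurable x)
    {M : ℝ} (hM : ∀ s, |x s| ≤ M) (j : ℕ) (t : ℝ) :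
    IntegrableOn (fun s => x s * gammaKernel α j (t - s)) (Iic t) := by
  simp_rw [mul_gammaKernel_sub]
  exact (integrableOn_Iic_mul_sub_pow (g := fun s => x s * Real.exp (α * s))
    (integrableOn_Iic_mul_exp_mul_pow hα hx hM) _ t t).const_mul _

theorem hasDerivAt_integral_Iic_mul_gammaKernel (hα : 0 < α) (hx : Continuous x)
    {M : ℝ} (hM : ∀ s, |x s| ≤ M) (n : ℕ) (t : ℝ) :
    HasDerivAt (fun τ => ∫ s in Iic τ, x s * gammaKernel α (n + 2) (τ - s))
      (α * ((∫ s in Iic t, x s * gammaKernel α (n + 1) (t - s)) -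
        ∫ s in Iic t, x s * gammaKernel α (n + 2) (t - s))) t := by
  have hexp : HasDerivAt (fun τ => Real.exp (-(α * τ))) (-α * Real.exp (-(α * t))) t := by
    simpa [mul_comm] using ((hasDerivAt_id t).const_mul α).neg.exp
  have hmoment := hasDerivAt_integral_Iic_mul_sub_pow_succ
    (g := fun s => x s * Real.exp (α * s))
    (integrableOn_Iic_mul_exp_mul_pow hα hx.aestronglyMeasurable hM) (by fun_prop) n t
  simp only [integral_Iic_mul_gammaKernel, Nat.add_sub_cancel, show n + 2 - 1 = n + 1 from rfl]
  refine ((hexp.const_mul _).mul hmoment).congr_deriv ?_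
  rw [Nat.factorial_succ, Nat.cast_mul]
  field_simp
  push_cast
  ring

end GammaKernel

/-- Let `α > 0`, let `x : ℝ → ℝ` be bounded and continuous, and for each integer `j ≥ 1`
let `r_j(t) := ∫_{-∞}^t x(s) F_j(t-s) ds`.  Then each `r_j` is well defined (the integrand
is integrable on `(-∞, t]` for every `t`), and for every `j ≥ 2` the function `r_j` is
differentiable with `r_j'(t) = α (r_{j-1}(t) - r_j(t))` for every `t ∈ ℝ`. -/
theorem stmt2 (α : ℝ) (hα : 0 < α) (x : ℝ → ℝ)
    (hxc : Continuous x) (hxb : ∃ M, ∀ s, |x s| ≤ M) :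
    (∀ j : ℕ, 1 ≤ j → ∀ t : ℝ,
      IntegrableOn (fun s => x s * gammaKernel α j (t - s)) (Set.Iic t)) ∧
    (∀ j : ℕ, 2 ≤ j → ∀ t : ℝ,
      HasDerivAt (fun τ => ∫ s in Set.Iic τ, x s * gammaKernel α j (τ - s))
        (α * ((∫ s in Set.Iic t, x s * gammaKernel α (j - 1) (t - s)) -
              ∫ s in Set.Iic t, x s * gammaKernel α j (t - s))) t) := by
  obtain ⟨M, hM⟩ := hxb
  refine ⟨fun j _ t => integrableOn_Iic_mul_gammaKernel hα hxc.aestronglyMeasurable hM j t,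
    fun j hj t => ?_⟩
  obtain ⟨n, rfl⟩ : ∃ n, j = n + 2 := ⟨j - 2, by omega⟩
  exact hasDerivAt_integral_Iic_mul_gammaKernel hα hxc hM n t
end

section
/- Let α > 0, let x : ℝ → ℝ be bounded and continuous, and let r : ℝ → ℝ be a differentiable function that is bounded on the whole real line and satisfies r'(t) = α(x(t) − r(t)) for every t ∈ ℝ. Then r is given by the convolution formula r(t) = ∫_{−∞}^t α e^{−α(t−s)} x(s) ds for every t ∈ ℝ; that is, any solution of the chain ODE that is bounded on the entire real line also solves the corresponding integral (distributed-delay) equation. -/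
/-!
Multiplying the equation by the integrating factor `e^{αs}` gives
`(e^{αs} r(s))' = α e^{αs} x(s)`. Integrating over `(-∞, t]` is legitimate because `x` is bounded,
and the boundary term at `-∞` vanishes because `r` is bounded and `α > 0`; dividing by `e^{αt}`
gives the convolution formula.
-/

open MeasureTheory Filter Set Real

lemma measurable_of_hasDerivAt_mul_sub {α : ℝ} (hα : α ≠ 0) {x r : ℝ → ℝ}
    (hr : ∀ t, HasDerivAt r (α * (x t - r t)) t) : Measurable x := by
  have hx : x = fun t => r t + deriv r t / α := by
    funext t
    rw [(hr t).deriv]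
    field_simp
    ring
  have hrc : Continuous r := continuous_iff_continuousAt.2 fun t => (hr t).continuousAt
  rw [hx]
  exact hrc.measurable.add ((measurable_deriv r).div_const α)

lemma hasDerivAt_exp_mul_mul {α : ℝ} {x r : ℝ → ℝ} {t : ℝ}
    (hr : HasDerivAt r (α * (x t - r t)) t) :
    HasDerivAt (fun s => exp (α * s) * r s) (α * exp (α * t) * x t) t := by
  have hexp : HasDerivAt (fun s => exp (α * s)) (exp (α * t) * α) t := by
    simpa only [mul_one] using ((hasDerivAt_id' t).const_mul α).exp
  exact (hexp.mul hr).congr_deriv (by ring)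

lemma integrableOn_exp_mul_mul_Iic {α : ℝ} (hα : 0 < α) {x : ℝ → ℝ}
    (hxm : AEStronglyMeasurable x volume) {M : ℝ} (hxb : ∀ s, |x s| ≤ M) (t : ℝ) :
    IntegrableOn (fun s => α * exp (α * s) * x s) (Iic t) :=
  ((integrableOn_exp_mul_Iic hα t).const_mul α).mul_bdd hxm.restrict
    (ae_of_all _ fun s => hxb s)

lemma tendsto_exp_mul_mul_atBot {α : ℝ} (hα : 0 < α) {r : ℝ → ℝ} {K : ℝ}
    (hrb : ∀ t, |r t| ≤ K) :
    Tendsto (fun s => exp (α * s) * r s) atBot (nhds 0) :=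
  (tendsto_exp_atBot.comp (tendsto_id.const_mul_atBot hα)).zero_mul_isBoundedUnder_le
    ⟨K, eventually_map.2 (Eventually.of_forall hrb)⟩

theorem stmt3_general (α : ℝ) (hα : 0 < α) (x : ℝ → ℝ)
    (hxb : ∃ M, ∀ s, |x s| ≤ M)
    (r : ℝ → ℝ) (hrb : ∃ K, ∀ t, |r t| ≤ K)
    (hr : ∀ t, HasDerivAt r (α * (x t - r t)) t) :
    ∀ t : ℝ, r t = ∫ s in Set.Iic t, α * Real.exp (-α * (t - s)) * x s := by
  obtain ⟨M, hM⟩ := hxb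
  obtain ⟨K, hK⟩ := hrb
  intro t
  have hxm : AEStronglyMeasurable x volume :=
    (measurable_of_hasDerivAt_mul_sub hα.ne' hr).aestronglyMeasurable
  have hFTC : ∫ s in Iic t, α * exp (α * s) * x s = exp (α * t) * r t - 0 :=
    integral_Iic_of_hasDerivAt_of_tendsto' (fun s _ => hasDerivAt_exp_mul_mul (hr s))
      (integrableOn_exp_mul_mul_Iic hα hxm hM t) (tendsto_exp_mul_mul_atBot hα hK)
  have hkernel : ∀ s, α * exp (-α * (t - s)) * x s = exp (-(α * t)) * (α * exp (α * s) * x s) :=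
    fun s => by rw [show -α * (t - s) = -(α * t) + α * s by ring, exp_add]; ring
  simp_rw [hkernel, integral_const_mul, hFTC, sub_zero, ← mul_assoc, ← exp_add, neg_add_cancel,
    exp_zero, one_mul]

/-- Let `α > 0`, let `x : ℝ → ℝ` be bounded and continuous, and let `r : ℝ → ℝ` be a
differentiable function that is bounded on the whole real line and satisfies
`r'(t) = α (x(t) - r(t))` for every `t ∈ ℝ`.  Then `r` is given by the convolution formula
`r(t) = ∫_{-∞}^t α e^{-α(t-s)} x(s) ds` for every `t ∈ ℝ`: any solution of the chain ODE
that is bounded on the entire real line also solves the corresponding integral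
(distributed-delay) equation. -/
theorem stmt3 (α : ℝ) (hα : 0 < α) (x : ℝ → ℝ)
    (hxc : Continuous x) (hxb : ∃ M, ∀ s, |x s| ≤ M)
    (r : ℝ → ℝ) (hrb : ∃ K, ∀ t, |r t| ≤ K)
    (hr : ∀ t, HasDerivAt r (α * (x t - r t)) t) :
    ∀ t : ℝ, r t = ∫ s in Set.Iic t, α * Real.exp (-α * (t - s)) * x s :=
  stmt3_general α hα x hxb r hrb hr
end

section
/- Let d, d', m be positive integers, write u = (x, y) ∈ ℝ^d × ℝ^{d'}, and let V : ℝ^d × ℝ^{d'} → [0,∞) be continuously differentiable. Let f₁ : ℝ^d → ℝ^d, f₂ : ℝ^{d'} → ℝ^{d'}, g₁ : ℝ^{d+d'} → ℝ^d, g₂ : ℝ^{d+d'} → ℝ^{d'}, h̃ : ℝ^{d+d'} × ℝ^m → ℝ^m be continuous; let D be a real m×m matrix with ⟨D r, r⟩ ≥ λ‖r‖² for all r ∈ ℝ^m and some λ > 0; let Π : ℝ^m → ℝ^{d'} be linear with ‖Π w‖ ≤ ‖w‖ for all w. Assume there exist constants α, β, a, b, m₁, m₂, γ, C₀ ≥ 0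 with: (H1) ⟨f₁(x), ∇_x V(u)⟩ + ⟨f₂(y), ∇_y V(u)⟩ + α V(u) ≤ β for all u; (H2) ⟨g₁(u), ∇_x V(u)⟩ + ⟨g₂(u), ∇_y V(u)⟩ ≤ a V(u) + b for all u; (H3) ⟨Π r, ∇_y V(u)⟩ + ⟨h̃(u, r), r⟩ ≤ m₁ V(u) + m₂ ‖r‖² for all (u, r); (H4) ‖∇_y V(u)‖² ≤ γ V(u) + C₀ for all u. Let z : [0,∞) → ℝ^m be continuous and let (x, y, r) : [0,∞) → ℝ^d × ℝ^{d'} × ℝ^m be differentiable and satisfy x' = f₁(x) + g₁(u), y' = f₂(y) + g₂(u) + Π(r + z(t)), r' = −D r + h̃(u, r) + D z(t). Then for every ε > 0 there exists a constant C_ε ≥ 0 such that, setting Ṽ(t) := V(u(t)) + ½‖r(t)‖² and κ_ε := min(α − a − m₁ − ε γ, 2(λ − m₂ − ε)), one has Ṽ'(t) + κ_ε Ṽ(t) ≤ β + b + ε C₀ + C_ε ‖z(t)‖² for every t ≥ 0. -/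
/-!
Differentiate `Ṽ = V(x, y) + ‖r‖²/2` along the trajectory: the chain rule through the partial
gradients of `V` splits `Ṽ'` into the drift terms controlled by (H1)–(H3) and the coercivity of
`D`, plus the two noise terms `⟪Π z, ∇_y V⟫` and `⟪D z, r⟫`. Young's inequality with weight `ε`
turns these into `ε ‖∇_y V‖² + ε ‖r‖²` (absorbed via (H4) and `λ`) and a multiple of `‖z‖²`;
finally `min A B * (V + ‖r‖²/2) ≤ A V + B ‖r‖²/2` since both summands are nonnegative.
-/

open scoped RealInnerProductSpace

section PartialGradient

variable {E F : Type*} [NormedAddCommGroup E] [InnerProductSpace ℝ E] [CompleteSpace E]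
  [NormedAddCommGroup F] [InnerProductSpace ℝ F] [CompleteSpace F]

theorem DifferentiableAt.fderiv_prod_apply_eq_inner_gradient {V : E × F → ℝ} {p : E} {q : F}
    (hV : DifferentiableAt ℝ V (p, q)) (v : E) (w : F) :
    fderiv ℝ V (p, q) (v, w) =
      ⟪v, gradient (fun p' => V (p', q)) p⟫ + ⟪w, gradient (fun q' => V (p, q')) q⟫ := by
  have hleft : fderiv ℝ (fun p' => V (p', q)) p = (fderiv ℝ V (p, q)).comp (.inl ℝ E F) :=
    (hV.hasFDerivAt.comp p (hasFDerivAt_prodMk_left p q)).fderiv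
  have hright : fderiv ℝ (fun q' => V (p, q')) q = (fderiv ℝ V (p, q)).comp (.inr ℝ E F) :=
    (hV.hasFDerivAt.comp q (hasFDerivAt_prodMk_right p q)).fderiv
  simp only [inner_gradient_right, conj_trivial, hleft, hright, ContinuousLinearMap.comp_apply,
    ContinuousLinearMap.inl_apply, ContinuousLinearMap.inr_apply, ← map_add, Prod.mk_add_mk,
    add_zero, zero_add]

theorem DifferentiableAt.hasDerivWithinAt_comp_prodMk {V : E × F → ℝ} {x : ℝ → E} {y : ℝ → F}
    {x' : E} {y' : F} {s : Set ℝ} {t : ℝ} (hV : DifferentiableAt ℝ V (x t, y t))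
    (hx : HasDerivWithinAt x x' s t) (hy : HasDerivWithinAt y y' s t) :
    HasDerivWithinAt (fun τ => V (x τ, y τ))
      (⟪x', gradient (fun p => V (p, y t)) (x t)⟫ + ⟪y', gradient (fun q => V (x t, q)) (y t)⟫)
      s t :=
  hV.fderiv_prod_apply_eq_inner_gradient x' y' ▸
    hV.hasFDerivAt.comp_hasDerivWithinAt t (hx.prodMk hy)

end PartialGradient

theorem HasDerivWithinAt.half_norm_sq {F : Type*} [NormedAddCommGroup F] [InnerProductSpace ℝ F]
    {r : ℝ → F} {r' : F} {s : Set ℝ} {t : ℝ} (hr : HasDerivWithinAt r r' s t) :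
    HasDerivWithinAt (fun τ => ‖r τ‖ ^ 2 / 2) ⟪r', r t⟫ s t := by
  simpa [real_inner_comm] using hr.norm_sq.div_const 2

theorem real_inner_le_mul_norm_sq_add_norm_sq_div {F : Type*} [NormedAddCommGroup F]
    [InnerProductSpace ℝ F] {ε : ℝ} (hε : 0 < ε) (v w : F) :
    ⟪v, w⟫ ≤ ε * ‖w‖ ^ 2 + ‖v‖ ^ 2 / (4 * ε) := by
  have hyoung := two_mul_le_add_mul_sq (a := ‖w‖) (b := ‖v‖) (mul_pos two_pos hε)
  linear_combination real_inner_le_norm v w + hyoung / 2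

theorem min_mul_add_le {A B V S : ℝ} (hV : 0 ≤ V) (hS : 0 ≤ S) :
    min A B * (V + S) ≤ A * V + B * S :=
  (mul_add _ _ _).trans_le <| add_le_add (mul_le_mul_of_nonneg_right (min_le_left A B) hV)
    (mul_le_mul_of_nonneg_right (min_le_right A B) hS)

theorem stmt6_general {d d' m : ℕ}
    (V : EuclideanSpace ℝ (Fin d) × EuclideanSpace ℝ (Fin d') → ℝ)
    (hV : ContDiff ℝ 1 V) (hVnn : ∀ u, 0 ≤ V u)
    (f₁ : EuclideanSpace ℝ (Fin d) → EuclideanSpace ℝ (Fin d))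
    (f₂ : EuclideanSpace ℝ (Fin d') → EuclideanSpace ℝ (Fin d'))
    (g₁ : EuclideanSpace ℝ (Fin d) × EuclideanSpace ℝ (Fin d') → EuclideanSpace ℝ (Fin d))
    (g₂ : EuclideanSpace ℝ (Fin d) × EuclideanSpace ℝ (Fin d') → EuclideanSpace ℝ (Fin d'))
    (htil : (EuclideanSpace ℝ (Fin d) × EuclideanSpace ℝ (Fin d')) × EuclideanSpace ℝ (Fin m)
      → EuclideanSpace ℝ (Fin m))
    (D : EuclideanSpace ℝ (Fin m) →ₗ[ℝ] EuclideanSpace ℝ (Fin m))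
    (lam : ℝ)
    (hD : ∀ w : EuclideanSpace ℝ (Fin m), lam * ‖w‖ ^ 2 ≤ (inner ℝ (D w) w : ℝ))
    (Pr : EuclideanSpace ℝ (Fin m) →ₗ[ℝ] EuclideanSpace ℝ (Fin d'))
    (hPr : ∀ w, ‖Pr w‖ ≤ ‖w‖)
    (α β a b m₁ m₂ γ C₀ : ℝ)
    (H1 : ∀ u : EuclideanSpace ℝ (Fin d) × EuclideanSpace ℝ (Fin d'),
      (inner ℝ (f₁ u.1) (gradient (fun x' => V (x', u.2)) u.1) : ℝ)
        + (inner ℝ (f₂ u.2) (gradient (fun y' => V (u.1, y')) u.2) : ℝ) + α * V u ≤ β)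
    (H2 : ∀ u : EuclideanSpace ℝ (Fin d) × EuclideanSpace ℝ (Fin d'),
      (inner ℝ (g₁ u) (gradient (fun x' => V (x', u.2)) u.1) : ℝ)
        + (inner ℝ (g₂ u) (gradient (fun y' => V (u.1, y')) u.2) : ℝ) ≤ a * V u + b)
    (H3 : ∀ (u : EuclideanSpace ℝ (Fin d) × EuclideanSpace ℝ (Fin d'))
        (w : EuclideanSpace ℝ (Fin m)),
      (inner ℝ (Pr w) (gradient (fun y' => V (u.1, y')) u.2) : ℝ)
        + (inner ℝ (htil (u, w)) w : ℝ) ≤ m₁ * V u + m₂ * ‖w‖ ^ 2)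
    (H4 : ∀ u : EuclideanSpace ℝ (Fin d) × EuclideanSpace ℝ (Fin d'),
      ‖gradient (fun y' => V (u.1, y')) u.2‖ ^ 2 ≤ γ * V u + C₀)
    (z : ℝ → EuclideanSpace ℝ (Fin m))
    (x : ℝ → EuclideanSpace ℝ (Fin d)) (y : ℝ → EuclideanSpace ℝ (Fin d'))
    (r : ℝ → EuclideanSpace ℝ (Fin m))
    (hx : ∀ t ∈ Set.Ici (0 : ℝ),
      HasDerivWithinAt x (f₁ (x t) + g₁ (x t, y t)) (Set.Ici 0) t)
    (hy : ∀ t ∈ Set.Ici (0 : ℝ),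
      HasDerivWithinAt y (f₂ (y t) + g₂ (x t, y t) + Pr (r t + z t)) (Set.Ici 0) t)
    (hr : ∀ t ∈ Set.Ici (0 : ℝ),
      HasDerivWithinAt r (-(D (r t)) + htil ((x t, y t), r t) + D (z t)) (Set.Ici 0) t) :
    ∀ ε > (0 : ℝ), ∃ Cε : ℝ, 0 ≤ Cε ∧
      ∀ t ∈ Set.Ici (0 : ℝ), ∀ v : ℝ,
        HasDerivWithinAt (fun τ => V (x τ, y τ) + ‖r τ‖ ^ 2 / 2) v (Set.Ici 0) t →
        v + min (α - a - m₁ - ε * γ) (2 * (lam - m₂ - ε)) *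
            (V (x t, y t) + ‖r t‖ ^ 2 / 2)
          ≤ β + b + ε * C₀ + Cε * ‖z t‖ ^ 2 := by
  intro ε hε
  set Dc := LinearMap.toContinuousLinearMap D
  refine ⟨(1 + ‖Dc‖ ^ 2) / (4 * ε), by positivity, fun t ht v hv => ?_⟩
  have hVu : DifferentiableAt ℝ V (x t, y t) := (hV.differentiable one_ne_zero).differentiableAt
  obtain rfl := (uniqueDiffOn_Ici 0 t ht).eq_deriv _ hv
    ((hVu.hasDerivWithinAt_comp_prodMk (hx t ht) (hy t ht)).add (hr t ht).half_norm_sq)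
  set Gy := gradient (fun q => V (x t, q)) (y t)
  have hself := H1 (x t, y t)
  have hcross := H2 (x t, y t)
  have hlast := H3 (x t, y t) (r t)
  have hnoise_y : ⟪Pr (z t), Gy⟫ ≤ ε * (γ * V (x t, y t) + C₀) + ‖z t‖ ^ 2 / (4 * ε) :=
    calc ⟪Pr (z t), Gy⟫ ≤ ε * ‖Gy‖ ^ 2 + ‖Pr (z t)‖ ^ 2 / (4 * ε) :=
          real_inner_le_mul_norm_sq_add_norm_sq_div hε _ _
      _ ≤ _ := by gcongr; exacts [H4 (x t, y t), hPr (z t)]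
  have hcoercive := hD (r t)
  have hnoise_r : ⟪D (z t), r t⟫ ≤ ε * ‖r t‖ ^ 2 + (‖Dc‖ * ‖z t‖) ^ 2 / (4 * ε) :=
    calc ⟪D (z t), r t⟫ ≤ ε * ‖r t‖ ^ 2 + ‖D (z t)‖ ^ 2 / (4 * ε) :=
          real_inner_le_mul_norm_sq_add_norm_sq_div hε _ _
      _ ≤ _ := by gcongr; exact Dc.le_opNorm (z t)
  have hmin := min_mul_add_le (A := α - a - m₁ - ε * γ) (B := 2 * (lam - m₂ - ε))
    (hVnn (x t, y t)) (by positivity : 0 ≤ ‖r t‖ ^ 2 / 2)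
  simp only [inner_add_left, inner_neg_left, map_add]
  linear_combination hself + hcross + hlast + hnoise_y + hcoercive + hnoise_r + hmin

/-- Deterministic energy estimate behind the existence of a global random attractor for
multilayer stochastic models.  Under the dissipativity hypotheses (H1)–(H4) on the
Lyapunov function `V`, on the self-interactions `f₁, f₂`, the cross-interactions
`g₁, g₂`, the last-layer nonlinearity `h̃`, the positive-definite drift `D` and the
projection `Π`, every trajectory of the transformed (pathwise) system satisfies, for each
`ε > 0` and a suitable constant `C_ε ≥ 0`, the differential inequality
`Ṽ'(t) + κ_ε Ṽ(t) ≤ β + b + ε C₀ + C_ε ‖z(t)‖²`, where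
`Ṽ(t) = V(u(t)) + ‖r(t)‖²/2` and `κ_ε = min (α - a - m₁ - ε γ) (2 (λ - m₂ - ε))`. -/
theorem stmt6 {d d' m : ℕ} (hd : 0 < d) (hd' : 0 < d') (hm : 0 < m)
    (V : EuclideanSpace ℝ (Fin d) × EuclideanSpace ℝ (Fin d') → ℝ)
    (hV : ContDiff ℝ 1 V) (hVnn : ∀ u, 0 ≤ V u)
    (f₁ : EuclideanSpace ℝ (Fin d) → EuclideanSpace ℝ (Fin d)) (hf₁ : Continuous f₁)
    (f₂ : EuclideanSpace ℝ (Fin d') → EuclideanSpace ℝ (Fin d')) (hf₂ : Continuous f₂)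
    (g₁ : EuclideanSpace ℝ (Fin d) × EuclideanSpace ℝ (Fin d') → EuclideanSpace ℝ (Fin d))
    (hg₁ : Continuous g₁)
    (g₂ : EuclideanSpace ℝ (Fin d) × EuclideanSpace ℝ (Fin d') → EuclideanSpace ℝ (Fin d'))
    (hg₂ : Continuous g₂)
    (htil : (EuclideanSpace ℝ (Fin d) × EuclideanSpace ℝ (Fin d')) × EuclideanSpace ℝ (Fin m)
      → EuclideanSpace ℝ (Fin m)) (hhtil : Continuous htil)
    (D : EuclideanSpace ℝ (Fin m) →ₗ[ℝ] EuclideanSpace ℝ (Fin m))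
    (lam : ℝ) (hlam : 0 < lam)
    (hD : ∀ w : EuclideanSpace ℝ (Fin m), lam * ‖w‖ ^ 2 ≤ (inner ℝ (D w) w : ℝ))
    (Pr : EuclideanSpace ℝ (Fin m) →ₗ[ℝ] EuclideanSpace ℝ (Fin d'))
    (hPr : ∀ w, ‖Pr w‖ ≤ ‖w‖)
    (α β a b m₁ m₂ γ C₀ : ℝ)
    (hα : 0 ≤ α) (hβ : 0 ≤ β) (ha : 0 ≤ a) (hb : 0 ≤ b) (hm₁ : 0 ≤ m₁)
    (hm₂ : 0 ≤ m₂) (hγ : 0 ≤ γ) (hC₀ : 0 ≤ C₀)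
    (H1 : ∀ u : EuclideanSpace ℝ (Fin d) × EuclideanSpace ℝ (Fin d'),
      (inner ℝ (f₁ u.1) (gradient (fun x' => V (x', u.2)) u.1) : ℝ)
        + (inner ℝ (f₂ u.2) (gradient (fun y' => V (u.1, y')) u.2) : ℝ) + α * V u ≤ β)
    (H2 : ∀ u : EuclideanSpace ℝ (Fin d) × EuclideanSpace ℝ (Fin d'),
      (inner ℝ (g₁ u) (gradient (fun x' => V (x', u.2)) u.1) : ℝ)
        + (inner ℝ (g₂ u) (gradient (fun y' => V (u.1, y')) u.2) : ℝ) ≤ a * V u + b)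
    (H3 : ∀ (u : EuclideanSpace ℝ (Fin d) × EuclideanSpace ℝ (Fin d'))
        (w : EuclideanSpace ℝ (Fin m)),
      (inner ℝ (Pr w) (gradient (fun y' => V (u.1, y')) u.2) : ℝ)
        + (inner ℝ (htil (u, w)) w : ℝ) ≤ m₁ * V u + m₂ * ‖w‖ ^ 2)
    (H4 : ∀ u : EuclideanSpace ℝ (Fin d) × EuclideanSpace ℝ (Fin d'),
      ‖gradient (fun y' => V (u.1, y')) u.2‖ ^ 2 ≤ γ * V u + C₀)
    (z : ℝ → EuclideanSpace ℝ (Fin m)) (hz : Continuous z)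
    (x : ℝ → EuclideanSpace ℝ (Fin d)) (y : ℝ → EuclideanSpace ℝ (Fin d'))
    (r : ℝ → EuclideanSpace ℝ (Fin m))
    (hx : ∀ t ∈ Set.Ici (0 : ℝ),
      HasDerivWithinAt x (f₁ (x t) + g₁ (x t, y t)) (Set.Ici 0) t)
    (hy : ∀ t ∈ Set.Ici (0 : ℝ),
      HasDerivWithinAt y (f₂ (y t) + g₂ (x t, y t) + Pr (r t + z t)) (Set.Ici 0) t)
    (hr : ∀ t ∈ Set.Ici (0 : ℝ),
      HasDerivWithinAt r (-(D (r t)) + htil ((x t, y t), r t) + D (z t)) (Set.Ici 0) t) :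
    ∀ ε > (0 : ℝ), ∃ Cε : ℝ, 0 ≤ Cε ∧
      ∀ t ∈ Set.Ici (0 : ℝ), ∀ v : ℝ,
        HasDerivWithinAt (fun τ => V (x τ, y τ) + ‖r τ‖ ^ 2 / 2) v (Set.Ici 0) t →
        v + min (α - a - m₁ - ε * γ) (2 * (lam - m₂ - ε)) *
            (V (x t, y t) + ‖r t‖ ^ 2 / 2)
          ≤ β + b + ε * C₀ + Cε * ‖z t‖ ^ 2 :=
  stmt6_general V hV hVnn f₁ f₂ g₁ g₂ htil D lam hD Pr hPr α β a b m₁ m₂ γ C₀ H1 H2 H3 H4 z x y r hx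
    hy hr
end
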